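/- arXiv:1612.03983 — 5 statements merged into one kernel-verified Lean document; each statement's English description precedes it below -/
import Mathlib

section
/- If a labeled graph G = (S,E) is complete (i.e., for every node s ∈ S and every mode σ ∈ {1,…,M} there is at least one edge (s,q,σ) ∈ E) and G is feasible for a family (V_s)_{s∈S}, then the function V(x) = min_{s∈S} V_s(x) is a common Lyapunov function for the switching system, i.e., V(f_σ(x)) ≤ V(x) for all σ ∈ {1,…,M} and all x ∈ ℝ^n. -/
/-- If a labeled graph `G = (S, E)` is complete (every node has,
for every mode `σ`, at least one outgoing edge labeled `σ`) and `G` is feasible for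
`(V_s)_{s ∈ S}`, then `V x = min_{s ∈ S} V_s x` is a common Lyapunov function. -/
theorem stmt_1 {n M : ℕ} (hn : 1 ≤ n) (hM : 1 ≤ M)
    (f : Fin M → (Fin n → ℝ) → (Fin n → ℝ))
    {S : Type*} [Fintype S] [Nonempty S]
    (E : Set (S × S × Fin M)) (V : S → (Fin n → ℝ) → ℝ)
    (hfeas : ∀ p q σ, (p, q, σ) ∈ E → ∀ x : Fin n → ℝ, V q (f σ x) ≤ V p x)
    (hcomplete : ∀ (s : S) (σ : Fin M), ∃ q : S, (s, q, σ) ∈ E) :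
    ∀ (σ : Fin M) (x : Fin n → ℝ),
      (Finset.univ.inf' Finset.univ_nonempty fun s => V s (f σ x)) ≤
        Finset.univ.inf' Finset.univ_nonempty fun s => V s x := by
  intro σ x
  apply Finset.le_inf'
  intro s _
  obtain ⟨q, hq⟩ := hcomplete s σ
  exact le_trans (Finset.inf'_le _ (Finset.mem_univ q)) (hfeas s q σ hq x)
end

section
/- If a labeled graph G = (S,E) is co-complete (i.e., for every node q ∈ S and every mode σ ∈ {1,…,M} there is at least one edge (p,q,σ) ∈ E) and G is feasible for a family (V_s)_{s∈S}, then the function V(x) = max_{s∈S} V_s(x) is a common Lyapunov function for the switching system, i.e., V(f_σ(x)) ≤ V(x) for all σ ∈ {1,…,M} and all x ∈ ℝ^n. -/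
/-- If a labeled graph `G = (S, E)` is co-complete (every node
has, for every mode `σ`, at least one incoming edge labeled `σ`) and `G` is
feasible for `(V_s)_{s ∈ S}`, then `V x = max_{s ∈ S} V_s x` is a common Lyapunov
function. -/
theorem stmt_3 {n M : ℕ} (hn : 1 ≤ n) (hM : 1 ≤ M)
    (f : Fin M → (Fin n → ℝ) → (Fin n → ℝ))
    {S : Type*} [Fintype S] [Nonempty S]
    (E : Set (S × S × Fin M)) (V : S → (Fin n → ℝ) → ℝ)
    (hfeas : ∀ p q σ, (p, q, σ) ∈ E → ∀ x : Fin n → ℝ, V q (f σ x) ≤ V p x)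
    (hcocomplete : ∀ (q : S) (σ : Fin M), ∃ p : S, (p, q, σ) ∈ E) :
    ∀ (σ : Fin M) (x : Fin n → ℝ),
      (Finset.univ.sup' Finset.univ_nonempty fun s => V s (f σ x)) ≤
        Finset.univ.sup' Finset.univ_nonempty fun s => V s x := by
  intro σ x
  apply Finset.sup'_le
  intro q _
  obtain ⟨p, hp⟩ := hcocomplete q σ
  exact le_trans (hfeas p q σ hp x) (Finset.le_sup' (fun s => V s x) (Finset.mem_univ p))
end

section
/- Let G = (S,E) be a path-complete labeled graph with length-1 labels, and let S_O be the collection of all subsets of S of the form T_{σ_k}(···T_{σ_1}(S)···) for finite (possibly empty) words σ_1···σ_k over {1,…,M} (all of which are nonempty by path-completeness). Then there exists exactly one nonempty subcollection C ⊆ S_O such that (i) C is complete: for every P ∈ C and every σ ∈ {1,…,M}, T_σ(P) ∈ C, and (ii) C is strongly connected: for any P, Q ∈ C there is a finite word σ_1···σ_k with T_{σ_k}(···T_{σ_1}(P)···) = Q. -/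
/-- A directed path in a labeled graph `(S, E)` from a node to a node, carrying
the word read along the path as its label. -/
inductive HasPath {S L : Type*} (E : Set (S × S × L)) : S → S → List L → Prop
  | nil (s : S) : HasPath E s s []
  | cons {s t d : S} {σ : L} {w : List L} :
      (s, t, σ) ∈ E → HasPath E t d w → HasPath E s d (σ :: w)

/-- A labeled graph is path-complete if every finite word is contained (as a
contiguous subword) in the label of some directed path of the graph. -/
def PathComplete {S L : Type*} (E : Set (S × S × L)) : Prop :=
  ∀ w : List L, ∃ (s d : S) (w₁ w₂ : List L), HasPath E s d (w₁ ++ w ++ w₂)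

/-- The observer successor set `T_σ(P) = {q | ∃ p ∈ P, (p, q, σ) ∈ E}`. -/
def Tset {S L : Type*} (E : Set (S × S × L)) (σ : L) (P : Set S) : Set S :=
  {q | ∃ p ∈ P, (p, q, σ) ∈ E}

/-!
The observer maps `T_σ` are monotone, so the reachable sets that are minimal for inclusion are
absorbing: if `K = T_m(S)` is minimal, then `T_m(T_w(S)) ⊆ T_m(S) = K` forces `T_{wm}(S) = K`
for every word `w`. Hence `K` is reachable from every node of `S_O`. For any deterministic
transition system with such a state `K`, the states reachable from `K` form a complete, strongly
connected collection, and every nonempty complete, strongly connected collection of reachable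
states contains `K` and therefore coincides with it.
-/

section Transition

variable {α L : Type*} (δ : α → L → α)

theorem List.foldl_mem_of_forall_mem {C : Set α} (hC : ∀ a ∈ C, ∀ σ, δ a σ ∈ C) (w : List L)
    {a : α} (ha : a ∈ C) : w.foldl δ a ∈ C := by
  induction w generalizing a with
  | nil => exact ha
  | cons σ w ih => exact ih (hC a ha σ)

theorem exists_foldl_append_eq_of_monotone [PartialOrder α] [OrderTop α] [WellFoundedLT α]
    (hδ : ∀ σ, Monotone fun a => δ a σ) :
    ∃ m : List L, ∀ w : List L, (w ++ m).foldl δ ⊤ = m.foldl δ ⊤ := by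
  obtain ⟨K, ⟨m, rfl⟩, hmin⟩ :=
    exists_minimal_of_wellFoundedLT (fun a => ∃ m : List L, m.foldl δ ⊤ = a) ⟨⊤, [], rfl⟩
  refine ⟨m, fun w => le_antisymm ?_ (hmin ⟨w ++ m, rfl⟩ ?_)⟩ <;>
  · rw [List.foldl_append]
    exact List.foldl_monotone hδ m le_top

theorem existsUnique_complete_stronglyConnected (a₀ K : α)
    (hK : ∀ w : List L, ∃ v : List L, (w ++ v).foldl δ a₀ = K) :
    ∃! C : Set α,
      C.Nonempty ∧
      C ⊆ {a | ∃ w : List L, a = w.foldl δ a₀} ∧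
      (∀ a ∈ C, ∀ σ : L, δ a σ ∈ C) ∧
      (∀ a ∈ C, ∀ b ∈ C, ∃ w : List L, w.foldl δ a = b) := by
  obtain ⟨u₀, hu₀⟩ := hK []
  rw [List.nil_append] at hu₀
  have reach_K (w : List L) : ∃ v : List L, v.foldl δ (w.foldl δ K) = K := by
    obtain ⟨v, hv⟩ := hK (u₀ ++ w)
    exact ⟨v, by simpa only [List.foldl_append, hu₀] using hv⟩
  refine ⟨Set.range fun w : List L => w.foldl δ K, ⟨⟨K, [], rfl⟩, ?_, ?_, ?_⟩, ?_⟩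
  · rintro _ ⟨w, rfl⟩
    exact ⟨u₀ ++ w, by rw [List.foldl_append, hu₀]⟩
  · rintro _ ⟨w, rfl⟩ σ
    exact ⟨w ++ [σ], by simp⟩
  · rintro _ ⟨u, rfl⟩ _ ⟨w, rfl⟩
    obtain ⟨v, hv⟩ := reach_K u
    exact ⟨v ++ w, by rw [List.foldl_append, hv]⟩
  · rintro C ⟨⟨a, ha⟩, hreach, hcomplete, hconnected⟩
    obtain ⟨w, rfl⟩ := hreach ha
    obtain ⟨v, hv⟩ := hK w
    have hKC : K ∈ C := by
      rw [← hv, List.foldl_append]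
      exact List.foldl_mem_of_forall_mem δ hcomplete v ha
    ext b
    constructor
    · intro hb
      exact hconnected K hKC b hb
    · rintro ⟨u, rfl⟩
      exact List.foldl_mem_of_forall_mem δ hcomplete u hKC

end Transition

theorem Tset_monotone {S L : Type*} (E : Set (S × S × L)) (σ : L) :
    Monotone (Tset E σ) := by
  rintro P Q hPQ q ⟨p, hp, hpq⟩
  exact ⟨p, hPQ hp, hpq⟩

theorem stmt_5_general {M : ℕ} {S : Type*} [Fintype S]
    (E : Set (S × S × Fin M)) :
    ∃! C : Set (Set S),
      C.Nonempty ∧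
      C ⊆ {P | ∃ w : List (Fin M),
              P = w.foldl (fun R σ => Tset E σ R) Set.univ} ∧
      (∀ P ∈ C, ∀ σ : Fin M, Tset E σ P ∈ C) ∧
      (∀ P ∈ C, ∀ Q ∈ C,
        ∃ w : List (Fin M), w.foldl (fun R σ => Tset E σ R) P = Q) := by
  obtain ⟨m, hm⟩ :=
    exists_foldl_append_eq_of_monotone (fun R σ => Tset E σ R) (Tset_monotone E)
  exact existsUnique_complete_stronglyConnected _ Set.univ _ fun w => ⟨m, hm w⟩

/-- Lemma 3.1 of the paper. The observer graph of a
path-complete graph (whose node set `S_O` consists of all sets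
`T_{σ_k}(⋯T_{σ_1}(S)⋯)` for finite words `σ_1⋯σ_k`) contains a *unique* nonempty
subcollection of nodes `C` that is complete (closed under every observer
successor map `T_σ`) and strongly connected (any node of `C` can be mapped to
any other by iterating the observer successor maps along some finite word). -/
theorem stmt_5 {M : ℕ} (hM : 1 ≤ M) {S : Type*} [Fintype S] [Nonempty S]
    (E : Set (S × S × Fin M)) (hpc : PathComplete E) :
    ∃! C : Set (Set S),
      C.Nonempty ∧
      C ⊆ {P | ∃ w : List (Fin M),
              P = w.foldl (fun R σ => Tset E σ R) Set.univ} ∧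
      (∀ P ∈ C, ∀ σ : Fin M, Tset E σ P ∈ C) ∧
      (∀ P ∈ C, ∀ Q ∈ C,
        ∃ w : List (Fin M), w.foldl (fun R σ => Tset E σ R) P = Q) :=
  stmt_5_general E
end

section
/- Let G = (S,E) be a labeled graph such that for every mode σ ∈ {1,…,M} there exists a subset E_σ ⊆ E with the property that for every p ∈ S there is exactly one q ∈ S with (p,q,σ) ∈ E_σ, and for every q ∈ S there is exactly one p ∈ S with (p,q,σ) ∈ E_σ. If G is feasible for a family (V_s)_{s∈S}, then the sum V(x) = ∑_{s∈S} V_s(x) is a common Lyapunov function for the switching system, i.e., V(f_σ(x)) ≤ V(x) for all σ ∈ {1,…,M} and all x ∈ ℝ^n. -/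
/-- Corollary 4.1 of the paper. If, for every mode `σ`, a
labeled graph `G = (S, E)` contains a subset of edges `E_σ ⊆ E` labeled `σ`
forming a bijection of `S` onto itself (every source has exactly one target and
vice versa), and `G` is feasible for `(V_s)_{s ∈ S}`, then `V x = ∑_{s ∈ S} V_s x`
is a common Lyapunov function for the switching system. -/
theorem stmt_9 {n M : ℕ} (hn : 1 ≤ n) (hM : 1 ≤ M)
    (f : Fin M → (Fin n → ℝ) → (Fin n → ℝ))
    {S : Type*} [Fintype S] [Nonempty S]
    (E : Set (S × S × Fin M)) (V : S → (Fin n → ℝ) → ℝ)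
    (hbij : ∀ σ : Fin M, ∃ Eσ : Set (S × S × Fin M), Eσ ⊆ E ∧
      (∀ p : S, ∃! q : S, (p, q, σ) ∈ Eσ) ∧
      (∀ q : S, ∃! p : S, (p, q, σ) ∈ Eσ))
    (hfeas : ∀ p q σ, (p, q, σ) ∈ E → ∀ x : Fin n → ℝ, V q (f σ x) ≤ V p x) :
    ∀ (σ : Fin M) (x : Fin n → ℝ),
      (∑ s : S, V s (f σ x)) ≤ ∑ s : S, V s x := by
  intro σ x
  obtain ⟨Eσ, hsub, hfwd, hbwd⟩ := hbij σ
  set g : S → S := fun p => (hfwd p).choose with hg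
  have hgmem : ∀ p, (p, g p, σ) ∈ Eσ := fun p => (hfwd p).choose_spec.1
  have hginj : Function.Injective g := by
    intro p p' h
    obtain ⟨q, hq, huniq⟩ := hbwd (g p)
    have h1 := huniq p (hgmem p)
    have h2 := huniq p' (h ▸ hgmem p')
    rw [h1, h2]
  have hgbij : Function.Bijective g := (Finite.injective_iff_bijective).mp hginj
  have : (∑ s : S, V s (f σ x)) = ∑ p : S, V (g p) (f σ x) :=
    (Fintype.sum_bijective g hgbij _ _ (fun _ => rfl)).symm
  rw [this]
  exact Finset.sum_le_sum fun p _ => hfeas p (g p) σ (hsub (hgmem p)) x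
end

section
/- Let U be a set of functions from ℝ^n to ℝ that is closed under pointwise binary minimum and pointwise binary maximum. If some path-complete labeled graph G_1 = (S_1,E_1) with length-1 labels is feasible for a family (V_s)_{s∈S_1} with V_s ∈ U for every s, then there exists a common Lyapunov function V ∈ U for the switching system; consequently, for every labeled graph G_2 = (S_2,E_2) over the same label set, G_2 is feasible for a family of pieces all belonging to U (namely the constant family W_s = V), so G_1 ≤_U G_2. -/
/-!
Track, for every word `w`, the set `post_w` of nodes reachable from the whole node set by a
path labeled `w`; path-completeness makes each `post_w` nonempty, and there are finitely many
of them. Then `W x = min_w max_{s ∈ post_w} V_s x` is a common Lyapunov function: reading one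
more letter `σ` maps `post_w` onto `post_{wσ}`, and each edge `(p, q, σ)` gives
`V_q (f_σ x) ≤ V_p x`, so `max_{post_{wσ}} V (f_σ x) ≤ max_{post_w} V x`. Closure of `U`
under `min` and `max` keeps `W` in `U`.
-/

open Finset

section

variable {S L : Type*}

theorem HasPath.append_split {E : Set (S × S × L)} {s d : S} {u v : List L}
    (h : HasPath E s d (u ++ v)) : ∃ m, HasPath E s m u ∧ HasPath E m d v := by
  induction u generalizing s with
  | nil => exact ⟨s, .nil s, h⟩
  | cons σ u ih =>
    cases h with
    | cons he h' =>
      obtain ⟨m, hsm, hmd⟩ := ih h'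
      exact ⟨m, .cons he hsm, hmd⟩

section Post

variable [Fintype S] (E : Set (S × S × L))

open Classical in
noncomputable def post (σ : L) (T : Finset S) : Finset S :=
  univ.filter fun q => ∃ p ∈ T, (p, q, σ) ∈ E

variable {E} in
theorem mem_post {σ : L} {T : Finset S} {q : S} : q ∈ post E σ T ↔ ∃ p ∈ T, (p, q, σ) ∈ E := by
  simp [post]

noncomputable def postWord (w : List L) (T : Finset S) : Finset S :=
  w.foldl (fun T σ => post E σ T) T

theorem postWord_concat (w : List L) (σ : L) (T : Finset S) :
    postWord E (w ++ [σ]) T = post E σ (postWord E w T) :=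
  List.foldl_concat ..

variable {E} in
theorem HasPath.mem_postWord {s d : S} {w : List L}
    (h : HasPath E s d w) {T : Finset S} (hs : s ∈ T) : d ∈ postWord E w T := by
  induction h generalizing T with
  | nil => exact hs
  | cons he _ ih => exact ih (mem_post.mpr ⟨_, hs, he⟩)

variable {E} in
theorem PathComplete.postWord_nonempty (hpc : PathComplete E) (w : List L) :
    (postWord E w univ).Nonempty := by
  obtain ⟨s, d, w₁, w₂, hp⟩ := hpc w
  obtain ⟨m, -, hmd⟩ := HasPath.append_split (List.append_assoc w₁ w w₂ ▸ hp)
  obtain ⟨m', hmm', -⟩ := HasPath.append_split hmd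
  exact ⟨m', hmm'.mem_postWord (mem_univ m)⟩

open Classical in
noncomputable def reachableSets : Finset (Finset S) :=
  univ.filter fun T => ∃ w, postWord E w univ = T

variable {E} in
theorem mem_reachableSets {T : Finset S} : T ∈ reachableSets E ↔ ∃ w, postWord E w univ = T := by
  simp [reachableSets]

theorem reachableSets_nonempty : (reachableSets E).Nonempty :=
  ⟨univ, mem_reachableSets.mpr ⟨[], rfl⟩⟩

variable {E} in
theorem post_mem_reachableSets (σ : L) {T : Finset S} (hT : T ∈ reachableSets E) :
    post E σ T ∈ reachableSets E := by
  obtain ⟨w, rfl⟩ := mem_reachableSets.mp hT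
  exact mem_reachableSets.mpr ⟨w ++ [σ], postWord_concat E w σ univ⟩

variable {E} in
theorem PathComplete.nonempty_of_mem_reachableSets (hpc : PathComplete E) {T : Finset S}
    (hT : T ∈ reachableSets E) : T.Nonempty := by
  obtain ⟨w, rfl⟩ := mem_reachableSets.mp hT
  exact hpc.postWord_nonempty w

end Post

section Lyapunov

variable [Fintype S] {E : Set (S × S × L)} {X β : Type*} [LinearOrder β]
  {f : L → X → X} {V : S → X → β}

theorem sup'_post_le (hfeas : ∀ p q σ, (p, q, σ) ∈ E → ∀ x, V q (f σ x) ≤ V p x)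
    (σ : L) (x : X) {T : Finset S} (hT : T.Nonempty) (hpost : (post E σ T).Nonempty) :
    (post E σ T).sup' hpost (fun q => V q (f σ x)) ≤ T.sup' hT (fun p => V p x) :=
  sup'_le _ _ fun q hq => by
    obtain ⟨p, hp, he⟩ := mem_post.mp hq
    exact (hfeas p q σ he x).trans (le_sup' (fun p => V p x) hp)

theorem PathComplete.exists_commonLyapunov_mem (hpc : PathComplete E) (U : Set (X → β))
    (hinf : ∀ u ∈ U, ∀ v ∈ U, u ⊓ v ∈ U) (hsup : ∀ u ∈ U, ∀ v ∈ U, u ⊔ v ∈ U)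
    (hVU : ∀ s, V s ∈ U) (hfeas : ∀ p q σ, (p, q, σ) ∈ E → ∀ x, V q (f σ x) ≤ V p x) :
    ∃ W ∈ U, ∀ σ x, W (f σ x) ≤ W x := by
  have hne := fun T (hT : T ∈ reachableSets E) => hpc.nonempty_of_mem_reachableSets hT
  let W : X → β := (reachableSets E).attach.inf' (reachableSets_nonempty E).attach
    fun T => T.1.sup' (hne T.1 T.2) V
  refine ⟨W, inf'_mem U hinf _ _ _ fun T _ => sup'_mem U hsup _ _ _ fun s _ => hVU s,
    fun σ x => ?_⟩
  simp only [W, Finset.inf'_apply, Finset.sup'_apply]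
  refine le_inf' _ _ fun T _ => ?_
  have hpost := post_mem_reachableSets σ T.2
  calc _ ≤ (post E σ T.1).sup' (hne _ hpost) fun q => V q (f σ x) :=
        inf'_le _ (mem_attach _ ⟨_, hpost⟩)
    _ ≤ _ := sup'_post_le hfeas σ x _ _

end Lyapunov

end

theorem stmt_15_general {n M : ℕ}
    (f : Fin M → (Fin n → ℝ) → (Fin n → ℝ))
    (U : Set ((Fin n → ℝ) → ℝ))
    (hmin : ∀ u ∈ U, ∀ v ∈ U, (fun x => min (u x) (v x)) ∈ U)
    (hmax : ∀ u ∈ U, ∀ v ∈ U, (fun x => max (u x) (v x)) ∈ U)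
    {S₁ : Type*} [Fintype S₁]
    (E₁ : Set (S₁ × S₁ × Fin M)) (hpc : PathComplete E₁)
    (V : S₁ → (Fin n → ℝ) → ℝ) (hVU : ∀ s, V s ∈ U)
    (hfeas : ∀ p q σ, (p, q, σ) ∈ E₁ → ∀ x : Fin n → ℝ, V q (f σ x) ≤ V p x) :
    ∃ W ∈ U, (∀ (σ : Fin M) (x : Fin n → ℝ), W (f σ x) ≤ W x) ∧
      ∀ (S₂ : Type) (E₂ : Set (S₂ × S₂ × Fin M)),
        ∃ W₂ : S₂ → (Fin n → ℝ) → ℝ, (∀ s, W₂ s ∈ U) ∧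
          ∀ p q σ, (p, q, σ) ∈ E₂ →
            ∀ x : Fin n → ℝ, W₂ q (f σ x) ≤ W₂ p x := by
  obtain ⟨W, hWU, hW⟩ := hpc.exists_commonLyapunov_mem U hmin hmax hVU hfeas
  exact ⟨W, hWU, hW, fun _ _ => ⟨fun _ => W, fun _ => hWU, fun _ _ σ _ x => hW σ x⟩⟩

/-- Remark 4.1 of the paper. Let `U` be a template of
functions closed under pointwise binary minimum and maximum. If some
path-complete graph `G₁` with length-1 labels is feasible for pieces all drawn
from `U`, then the system admits a common Lyapunov function `W ∈ U`;
consequently every labeled graph `G₂` over the same label set is feasible for a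
family of pieces all belonging to `U` (the constant family equal to `W`), i.e.
`G₁ ≤_U G₂`. -/
theorem stmt_15 {n M : ℕ} (hn : 1 ≤ n) (hM : 1 ≤ M)
    (f : Fin M → (Fin n → ℝ) → (Fin n → ℝ))
    (U : Set ((Fin n → ℝ) → ℝ))
    (hmin : ∀ u ∈ U, ∀ v ∈ U, (fun x => min (u x) (v x)) ∈ U)
    (hmax : ∀ u ∈ U, ∀ v ∈ U, (fun x => max (u x) (v x)) ∈ U)
    {S₁ : Type*} [Fintype S₁] [Nonempty S₁]
    (E₁ : Set (S₁ × S₁ × Fin M)) (hpc : PathComplete E₁)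
    (V : S₁ → (Fin n → ℝ) → ℝ) (hVU : ∀ s, V s ∈ U)
    (hfeas : ∀ p q σ, (p, q, σ) ∈ E₁ → ∀ x : Fin n → ℝ, V q (f σ x) ≤ V p x) :
    ∃ W ∈ U, (∀ (σ : Fin M) (x : Fin n → ℝ), W (f σ x) ≤ W x) ∧
      ∀ (S₂ : Type) (E₂ : Set (S₂ × S₂ × Fin M)),
        ∃ W₂ : S₂ → (Fin n → ℝ) → ℝ, (∀ s, W₂ s ∈ U) ∧
          ∀ p q σ, (p, q, σ) ∈ E₂ →
            ∀ x : Fin n → ℝ, W₂ q (f σ x) ≤ W₂ p x :=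
  stmt_15_general f U hmin hmax E₁ hpc V hVU hfeas
end
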